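/- If p ≤ q, a ∈ ℝ^p, b ∈ ℝ^q are positive vectors satisfying e_q(b)/e_p(a) ≤ e_{q−1}(b)/e_{p−1}(a) ≤ … ≤ e_{q−p+1}(b)/e_1(a) ≤ e_{q−p}(b), then the function x ↦ pFq(a; b; x) is log-concave on (0, ∞); equivalently, [pFq'(a;b;x)]² − pFq(a;b;x) · pFq''(a;b;x) ≥ 0 for all x > 0. -/

import Mathlib

open Finset

/-- The `m`-th elementary symmetric polynomial of `a 0, …, a (p-1)`. -/
noncomputable def esymm (p : ℕ) (a : ℕ → ℝ) (m : ℕ) : ℝ :=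
  ∑ s ∈ (Finset.range p).powersetCard m, ∏ i ∈ s, a i

/-- The generalized hypergeometric function `pFq(a; b; x)`. -/
noncomputable def pFq (p q : ℕ) (a b : ℕ → ℝ) (x : ℝ) : ℝ :=
  ∑' n : ℕ, (∏ i ∈ Finset.range p, (ascPochhammer ℝ n).eval (a i)) /
      ((∏ j ∈ Finset.range q, (ascPochhammer ℝ n).eval (b j)) * n.factorial) * x ^ n


lemma choose_cast_id (M j : ℕ) :
    (M.choose (j+1) : ℝ) * (j+1) = (M.choose j : ℝ) * ((M:ℝ) - j) := by
  rcases le_or_gt j M with h | h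
  · have h2 := Nat.choose_succ_right_eq M j
    have h3 : ((M.choose (j+1) * (j+1) : ℕ) : ℝ) = ((M.choose j * (M - j) : ℕ) : ℝ) := by
      exact_mod_cast congrArg (Nat.cast (R := ℝ)) h2
    push_cast [Nat.cast_sub h] at h3
    linarith
  · rw [Nat.choose_eq_zero_of_lt h, Nat.choose_eq_zero_of_lt (by omega)]
    simp

lemma core_ineq (M : ℕ) (g : ℕ → ℝ)
    (hsym : ∀ j ≤ M, g j = g (M - j))
    (hmono : ∀ j, 2*j+1 ≤ M → g j ≤ g (j+1)) :
    0 ≤ ∑ j ∈ range (M+1), (M.choose j : ℝ) * ((M:ℝ) - ((M:ℝ) - 2*j)^2) * g j := by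
  set h : ℕ → ℝ := fun k => -(k:ℝ) * (M.choose k : ℝ) * ((M:ℝ) - 2*k + 1) with hh
  have hstep : ∀ j, (M.choose j : ℝ) * ((M:ℝ) - ((M:ℝ) - 2*j)^2) = h (j+1) - h j := by
    intro j
    have key := choose_cast_id M j
    simp only [hh]
    push_cast
    nlinarith [key]
  have h0 : h 0 = 0 := by simp [hh]
  have hM1 : h (M+1) = 0 := by simp [hh, Nat.choose_succ_self]
  have main : (0:ℝ) ≤ ∑ j ∈ range M, (-(h (j+1))) * (g (j+1) - g j) := by
    apply Finset.sum_nonneg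
    intro j hj
    rw [mem_range] at hj
    have hnh : -(h (j+1)) = ((j:ℝ)+1) * (M.choose (j+1) : ℝ) * ((M:ℝ) - 2*j - 1) := by
      simp only [hh]; push_cast; ring
    rcases le_or_gt (2*j+1) M with hc | hc
    · apply mul_nonneg
      · rw [hnh]
        apply mul_nonneg (mul_nonneg (by positivity) (by positivity))
        have : (2*j+1 : ℝ) ≤ (M:ℝ) := by exact_mod_cast hc
        linarith
      · linarith [hmono j hc]
    · have h1 : -(h (j+1)) ≤ 0 := by
        rw [hnh]
        apply mul_nonpos_of_nonneg_of_nonpos (mul_nonneg (by positivity) (by positivity))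
        have : (M:ℝ) < 2*j+1 := by exact_mod_cast hc
        linarith
      have h2 : g (j+1) - g j ≤ 0 := by
        have e1 : g j = g (M - j) := hsym j (by omega)
        have e2 : g (j+1) = g (M - (j+1)) := hsym (j+1) (by omega)
        have e3 : M - j = (M - (j+1)) + 1 := by omega
        have e4 := hmono (M - (j+1)) (by omega)
        rw [e1, e2, e3]
        linarith
      nlinarith [mul_nonneg (neg_nonneg.mpr h1) (neg_nonneg.mpr h2)]
  have eq1 : ∑ j ∈ range M, (-(h (j+1))) * (g (j+1) - g j)
      = ∑ j ∈ range (M+1), (h (j+1) - h j) * g j := by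
    have A : ∑ j ∈ range (M+1), h (j+1) * g j
        = ∑ j ∈ range M, h (j+1) * g j + h (M+1) * g M := by
      rw [Finset.sum_range_succ]
    have B : ∑ j ∈ range (M+1), h j * g j
        = ∑ j ∈ range M, h (j+1) * g (j+1) + h 0 * g 0 := by
      rw [Finset.sum_range_succ']
    have C : ∑ j ∈ range (M+1), (h (j+1) - h j) * g j
        = ∑ j ∈ range (M+1), h (j+1) * g j - ∑ j ∈ range (M+1), h j * g j := by
      rw [← Finset.sum_sub_distrib]; apply Finset.sum_congr rfl; intro j _; ring
    rw [C, A, B, hM1, h0]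
    simp only [zero_mul, add_zero]
    rw [← Finset.sum_sub_distrib]
    apply Finset.sum_congr rfl
    intro j _
    ring
  have eq2 : ∑ j ∈ range (M+1), (h (j+1) - h j) * g j
      = ∑ j ∈ range (M+1), (M.choose j : ℝ) * ((M:ℝ) - ((M:ℝ) - 2*j)^2) * g j := by
    apply Finset.sum_congr rfl
    intro j _
    rw [hstep j]
  rw [eq1, eq2] at main
  exact main
open Finset


lemma esymm_nonneg (p : ℕ) (a : ℕ → ℝ) (h : ∀ i < p, 0 ≤ a i) (m : ℕ) :
    0 ≤ esymm p a m := by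
  apply Finset.sum_nonneg
  intro s hs
  apply Finset.prod_nonneg
  intro i hi
  have : i ∈ range p := (Finset.mem_powersetCard.mp hs).1 hi
  exact h i (mem_range.mp this)

lemma esymm_pos (p : ℕ) (a : ℕ → ℝ) (h : ∀ i < p, 0 < a i) {m : ℕ} (hm : m ≤ p) :
    0 < esymm p a m := by
  apply Finset.sum_pos
  · intro s hs
    apply Finset.prod_pos
    intro i hi
    have : i ∈ range p := (Finset.mem_powersetCard.mp hs).1 hi
    exact h i (mem_range.mp this)
  · exact Finset.powersetCard_nonempty_of_le (by simpa using hm)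

/-- Vieta: `∏ i < p, (a i + x) = ∑ m ≤ p, esymm p a m * x^(p-m)`. -/
lemma vieta (p : ℕ) (a : ℕ → ℝ) (x : ℝ) :
    ∏ i ∈ range p, (a i + x) = ∑ m ∈ range (p+1), esymm p a m * x^(p-m) := by
  rw [Finset.prod_add]
  rw [Finset.powerset_card_disjiUnion]
  erw [Finset.sum_disjiUnion]
  rw [Finset.card_range]
  apply Finset.sum_congr rfl
  intro m _
  rw [esymm, Finset.sum_mul]
  apply Finset.sum_congr rfl
  intro s hs
  obtain ⟨hsub, hcard⟩ := Finset.mem_powersetCard.mp hs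
  rw [Finset.prod_const]
  congr 1
  rw [Finset.card_sdiff_of_subset hsub, Finset.card_range, hcard]

section Chain

variable (p q : ℕ) (a b : ℕ → ℝ)

/-- Descending chain of esymm ratios, in cross-multiplied form. -/
lemma chain_cross (hpq : p ≤ q)
    (ha : ∀ i < p, 0 < a i) (hb : ∀ j < q, 0 < b j)
    (hchain : ∀ j, 1 ≤ j → j ≤ p →
      esymm q b (q - p + j) / esymm p a j ≤ esymm q b (q - p + j - 1) / esymm p a (j - 1))
    {j' j : ℕ} (hj' : j' ≤ j) (hj : j ≤ p) :
    esymm p a j' * esymm q b (q - p + j) ≤ esymm p a j * esymm q b (q - p + j') := by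
  -- first, ratio form decreasing, by induction on the gap
  have key : ∀ d j', j' + d ≤ p →
      esymm q b (q - p + (j' + d)) / esymm p a (j' + d) ≤ esymm q b (q - p + j') / esymm p a j' := by
    intro d
    induction d with
    | zero => intro j' _; exact le_refl _
    | succ d ih =>
      intro j' hle
      have h1 := ih j' (by omega)
      have h2 := hchain (j' + d + 1) (by omega) (by omega)
      have e1 : q - p + (j' + d + 1) - 1 = q - p + (j' + d) := by omega
      have e2 : j' + d + 1 - 1 = j' + d := by omega
      rw [e1, e2] at h2
      calc esymm q b (q - p + (j' + (d+1))) / esymm p a (j' + (d+1))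
          = esymm q b (q - p + (j' + d + 1)) / esymm p a (j' + d + 1) := by ring_nf
        _ ≤ esymm q b (q - p + (j' + d)) / esymm p a (j' + d) := h2
        _ ≤ _ := h1
  have hd := key (j - j') j' (by omega)
  rw [Nat.add_sub_cancel' hj'] at hd
  have pa1 : 0 < esymm p a j := esymm_pos p a ha hj
  have pa2 : 0 < esymm p a j' := esymm_pos p a ha (by omega)
  rw [div_le_div_iff₀ pa1 pa2] at hd
  linarith
end Chain

/-- The cross inequality `P t * Q s ≤ P s * Q t` for `s ≤ t`. -/
lemma cross (p q : ℕ) (a b : ℕ → ℝ) (hpq : p ≤ q)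
    (ha : ∀ i < p, 0 < a i) (hb : ∀ j < q, 0 < b j)
    (hchain : ∀ j, 1 ≤ j → j ≤ p →
      esymm q b (q - p + j) / esymm p a j ≤ esymm q b (q - p + j - 1) / esymm p a (j - 1))
    {s t : ℕ} (hst : s ≤ t) :
    (∏ i ∈ range p, (a i + (t:ℝ))) * (∏ j ∈ range q, (b j + (s:ℝ)))
      ≤ (∏ i ∈ range p, (a i + (s:ℝ))) * (∏ j ∈ range q, (b j + (t:ℝ))) := by
  set α : ℕ → ℝ := fun u => if u ≤ p then esymm p a (p - u) else 0 with hα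
  set β : ℕ → ℝ := fun v => esymm q b (q - v) with hβ
  have hαv : ∀ u ≤ p, α u = esymm p a (p - u) := by
    intro u hu; simp [hα, hu]
  have hP : ∀ x : ℝ, ∏ i ∈ range p, (a i + x) = ∑ u ∈ range (q+1), α u * x^u := by
    intro x
    rw [vieta]
    have e1 : ∑ m ∈ range (p+1), esymm p a m * x^(p-m)
        = ∑ u ∈ range (p+1), α u * x^u := by
      rw [← Finset.sum_range_reflect]
      apply Finset.sum_congr rfl
      intro u hu
      rw [mem_range] at hu
      rw [hαv u (by omega)]
      have e2 : p + 1 - 1 - u = p - u := by omega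
      have e3 : p - (p - u) = u := by omega
      rw [e2, e3]
    rw [e1]
    apply Finset.sum_subset
    · apply Finset.range_subset_range.mpr; omega
    · intro u hu hu'
      rw [mem_range] at hu hu'
      have h1 : ¬ (u ≤ p) := by omega
      simp [hα, h1]
  have hQ : ∀ x : ℝ, ∏ j ∈ range q, (b j + x) = ∑ v ∈ range (q+1), β v * x^v := by
    intro x
    rw [vieta]
    rw [← Finset.sum_range_reflect]
    apply Finset.sum_congr rfl
    intro v hv
    rw [mem_range] at hv
    simp only [hβ]
    have e2 : q + 1 - 1 - v = q - v := by omega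
    have e3 : q - (q - v) = v := by omega
    rw [e2, e3]
  -- expand both sides as double sums
  have expand : ∀ y z : ℝ,
      (∏ i ∈ range p, (a i + y)) * (∏ j ∈ range q, (b j + z))
      = ∑ u ∈ range (q+1), ∑ v ∈ range (q+1), α u * β v * y^u * z^v := by
    intro y z
    rw [hP y, hQ z, Finset.sum_mul_sum]
    apply Finset.sum_congr rfl; intro u _
    apply Finset.sum_congr rfl; intro v _
    ring
  rw [expand, expand]
  -- difference is antisymmetrized double sum
  rw [← sub_nonneg, ← Finset.sum_sub_distrib]
  simp only [← Finset.sum_sub_distrib]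
  -- sum over (u,v) of H u v where H u v := α u * β v * s^u * t^v - α u * β v * t^u * s^v
  set H : ℕ → ℕ → ℝ := fun u v =>
    α u * β v * (s:ℝ)^u * (t:ℝ)^v - α u * β v * (t:ℝ)^u * (s:ℝ)^v with hH
  show 0 ≤ ∑ u ∈ range (q+1), ∑ v ∈ range (q+1), H u v
  have swap : ∑ u ∈ range (q+1), ∑ v ∈ range (q+1), H u v
      = ∑ u ∈ range (q+1), ∑ v ∈ range (q+1), H v u := by
    rw [Finset.sum_comm]
  have key : ∀ u v, u ∈ range (q+1) → v ∈ range (q+1) → 0 ≤ H u v + H v u := by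
    intro u v hu hv
    rw [mem_range] at hu hv
    have hba : ∀ u' v', u' ≤ v' → v' ≤ q →
        α v' * β u' ≤ α u' * β v' := by
      intro u' v' huv hvq
      rcases le_or_gt v' p with hvp | hvp
      · rw [hαv u' (by omega), hαv v' hvp]
        have := chain_cross p q a b hpq ha hb hchain
          (j' := p - v') (j := p - u') (by omega) (by omega)
        have e1 : q - p + (p - u') = q - u' := by omega
        have e2 : q - p + (p - v') = q - v' := by omega
        rw [e1, e2] at this
        simp only [hβ]
        linarith
      · have h1 : α v' = 0 := by
          simp only [hα]; rw [if_neg (by omega : ¬ v' ≤ p)]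
        rw [h1, zero_mul]
        apply mul_nonneg
        · rcases le_or_gt u' p with h2 | h2
          · rw [hαv u' h2]
            exact le_of_lt (esymm_pos p a ha (by omega))
          · simp only [hα]; rw [if_neg (by omega : ¬ u' ≤ p)]
        · exact esymm_nonneg q b (fun j hj => le_of_lt (hb j hj)) _
    have hpow : ∀ u' v' : ℕ, u' ≤ v' →
        (s:ℝ)^v' * (t:ℝ)^u' ≤ (s:ℝ)^u' * (t:ℝ)^v' := by
      intro u' v' huv
      obtain ⟨d, rfl⟩ := Nat.exists_eq_add_of_le huv
      have hs0 : (0:ℝ) ≤ (s:ℝ) := by positivity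
      have hst' : (s:ℝ) ≤ (t:ℝ) := by exact_mod_cast hst
      have : (s:ℝ)^d ≤ (t:ℝ)^d := pow_le_pow_left₀ hs0 hst' d
      calc (s:ℝ)^(u'+d) * (t:ℝ)^u' = ((s:ℝ)^u' * (t:ℝ)^u') * (s:ℝ)^d := by ring
        _ ≤ ((s:ℝ)^u' * (t:ℝ)^u') * (t:ℝ)^d := by
            apply mul_le_mul_of_nonneg_left this; positivity
        _ = (s:ℝ)^u' * (t:ℝ)^(u'+d) := by ring
    rcases le_or_gt u v with huv | huv
    · have A := hba u v huv (by omega)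
      have B := hpow u v huv
      have hH' : H u v + H v u = (α u * β v - α v * β u) * ((s:ℝ)^u * (t:ℝ)^v - (s:ℝ)^v * (t:ℝ)^u) := by
        simp only [hH]; ring
      rw [hH']
      exact mul_nonneg (by linarith) (by linarith)
    · have A := hba v u (le_of_lt huv) (by omega)
      have B := hpow v u (le_of_lt huv)
      have hH' : H u v + H v u = (α v * β u - α u * β v) * ((s:ℝ)^v * (t:ℝ)^u - (s:ℝ)^u * (t:ℝ)^v) := by
        simp only [hH]; ring
      rw [hH']
      exact mul_nonneg (by linarith) (by linarith)
  have double : 0 ≤ ∑ u ∈ range (q+1), ∑ v ∈ range (q+1), (H u v + H v u) := by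
    apply Finset.sum_nonneg; intro u hu
    apply Finset.sum_nonneg; intro v hv
    exact key u v hu hv
  have split : ∑ u ∈ range (q+1), ∑ v ∈ range (q+1), (H u v + H v u)
      = (∑ u ∈ range (q+1), ∑ v ∈ range (q+1), H u v)
        + ∑ u ∈ range (q+1), ∑ v ∈ range (q+1), H v u := by
    rw [← Finset.sum_add_distrib]
    apply Finset.sum_congr rfl; intro u _
    rw [← Finset.sum_add_distrib]
  rw [split, ← swap] at double
  linarith
open Finset

noncomputable def cA (p : ℕ) (a : ℕ → ℝ) (n : ℕ) : ℝ :=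
  ∏ i ∈ Finset.range p, (ascPochhammer ℝ n).eval (a i)

noncomputable def Pa (p : ℕ) (a : ℕ → ℝ) (n : ℕ) : ℝ :=
  ∏ i ∈ Finset.range p, (a i + (n:ℝ))

noncomputable def cf (p q : ℕ) (a b : ℕ → ℝ) (n : ℕ) : ℝ :=
  cA p a n / (cA q b n * n.factorial)

lemma cA_zero (p : ℕ) (a : ℕ → ℝ) : cA p a 0 = 1 := by
  simp [cA, ascPochhammer_zero]

lemma cA_succ (p : ℕ) (a : ℕ → ℝ) (n : ℕ) : cA p a (n+1) = cA p a n * Pa p a n := by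
  rw [cA, cA, Pa, ← Finset.prod_mul_distrib]
  apply Finset.prod_congr rfl
  intro i _
  rw [ascPochhammer_succ_eval]

lemma cA_pos (p : ℕ) (a : ℕ → ℝ) (ha : ∀ i < p, 0 < a i) (n : ℕ) : 0 < cA p a n := by
  apply Finset.prod_pos
  intro i hi
  exact ascPochhammer_pos n (a i) (ha i (mem_range.mp hi))

lemma Pa_pos (p : ℕ) (a : ℕ → ℝ) (ha : ∀ i < p, 0 < a i) (n : ℕ) : 0 < Pa p a n := by
  apply Finset.prod_pos
  intro i hi
  have := ha i (mem_range.mp hi)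
  positivity

lemma cf_pos (p q : ℕ) (a b : ℕ → ℝ) (ha : ∀ i < p, 0 < a i) (hb : ∀ j < q, 0 < b j) (n : ℕ) :
    0 < cf p q a b n := by
  have h1 := cA_pos p a ha n
  have h2 := cA_pos q b hb n
  have h3 : (0:ℝ) < n.factorial := by exact_mod_cast n.factorial_pos
  rw [cf]; positivity

lemma cf_zero (p q : ℕ) (a b : ℕ → ℝ) : cf p q a b 0 = 1 := by
  simp [cf, cA_zero]

lemma cf_succ (p q : ℕ) (a b : ℕ → ℝ) (ha : ∀ i < p, 0 < a i) (hb : ∀ j < q, 0 < b j) (n : ℕ) :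
    cf p q a b (n+1) = (cf p q a b n * Pa p a n) / (Pa q b n * ((n:ℝ)+1)) := by
  have h2 := (cA_pos q b hb n).ne'
  have h3 : ((n.factorial : ℝ)) ≠ 0 := by exact_mod_cast n.factorial_pos.ne'
  have h4 := (Pa_pos q b hb n).ne'
  have h5 : ((n:ℝ)+1) ≠ 0 := by positivity
  rw [cf, cf, cA_succ, cA_succ]
  rw [Nat.factorial_succ]
  push_cast
  field_simp
  try ring
  try tauto

noncomputable def Kb (p q : ℕ) (a b : ℕ → ℝ) : ℝ :=
  (∏ i ∈ Finset.range p, (a i + 1)) / (∏ j ∈ Finset.range q, min (b j) 1)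

lemma Kb_pos (p q : ℕ) (a b : ℕ → ℝ) (ha : ∀ i < p, 0 < a i) (hb : ∀ j < q, 0 < b j) :
    0 < Kb p q a b := by
  apply div_pos
  · apply Finset.prod_pos; intro i hi; have := ha i (mem_range.mp hi); linarith
  · apply Finset.prod_pos; intro j hj
    have := hb j (mem_range.mp hj); exact lt_min this one_pos

lemma Pa_le (p q : ℕ) (a b : ℕ → ℝ) (hpq : p ≤ q)
    (ha : ∀ i < p, 0 < a i) (hb : ∀ j < q, 0 < b j) (n : ℕ) :
    Pa p a n ≤ Kb p q a b * Pa q b n := by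
  have hKb := Kb_pos p q a b ha hb
  have hmin : 0 < ∏ j ∈ Finset.range q, min (b j) 1 := by
    apply Finset.prod_pos; intro j hj
    exact lt_min (hb j (mem_range.mp hj)) one_pos
  have h1 : Pa p a n ≤ (∏ i ∈ Finset.range p, (a i + 1)) * ((n:ℝ)+1)^p := by
    rw [Pa]
    calc ∏ i ∈ Finset.range p, (a i + (n:ℝ))
        ≤ ∏ i ∈ Finset.range p, ((a i + 1) * ((n:ℝ)+1)) := by
          apply Finset.prod_le_prod
          · intro i hi; have := ha i (mem_range.mp hi); positivity
          · intro i hi; have := ha i (mem_range.mp hi); nlinarith [Nat.cast_nonneg (α := ℝ) n]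
      _ = (∏ i ∈ Finset.range p, (a i + 1)) * ((n:ℝ)+1)^p := by
          rw [Finset.prod_mul_distrib, Finset.prod_const, Finset.card_range]
  have h2 : (∏ j ∈ Finset.range q, min (b j) 1) * ((n:ℝ)+1)^q ≤ Pa q b n := by
    have h2a : ∏ j ∈ Finset.range q, (min (b j) 1 * ((n:ℝ)+1)) ≤ Pa q b n := by
      rw [Pa]
      apply Finset.prod_le_prod
      · intro j hj
        have hbj := hb j (mem_range.mp hj)
        have : (0:ℝ) < min (b j) 1 := lt_min hbj one_pos
        positivity
      · intro j hj
        have hbj := hb j (mem_range.mp hj)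
        have hn : (0:ℝ) ≤ (n:ℝ) := Nat.cast_nonneg n
        rcases le_total (b j) 1 with h | h
        · rw [min_eq_left h]; nlinarith
        · rw [min_eq_right h]; nlinarith
    calc (∏ j ∈ Finset.range q, min (b j) 1) * ((n:ℝ)+1)^q
        = ∏ j ∈ Finset.range q, (min (b j) 1 * ((n:ℝ)+1)) := by
          rw [Finset.prod_mul_distrib, Finset.prod_const, Finset.card_range]
      _ ≤ Pa q b n := h2a
  have h3 : ((n:ℝ)+1)^p ≤ ((n:ℝ)+1)^q := by
    apply pow_le_pow_right₀ (by linarith [Nat.cast_nonneg (α := ℝ) n]) hpq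
  calc Pa p a n ≤ (∏ i ∈ Finset.range p, (a i + 1)) * ((n:ℝ)+1)^p := h1
    _ ≤ (∏ i ∈ Finset.range p, (a i + 1)) * ((n:ℝ)+1)^q := by
        apply mul_le_mul_of_nonneg_left h3
        apply Finset.prod_nonneg; intro i hi; have := ha i (mem_range.mp hi); positivity
    _ = Kb p q a b * ((∏ j ∈ Finset.range q, min (b j) 1) * ((n:ℝ)+1)^q) := by
        rw [Kb]; field_simp
    _ ≤ Kb p q a b * Pa q b n := mul_le_mul_of_nonneg_left h2 hKb.le

lemma cf_le (p q : ℕ) (a b : ℕ → ℝ) (hpq : p ≤ q)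
    (ha : ∀ i < p, 0 < a i) (hb : ∀ j < q, 0 < b j) (n : ℕ) :
    cf p q a b n ≤ (Kb p q a b)^n / n.factorial := by
  induction n with
  | zero => simp [cf_zero]
  | succ n ih =>
    have hK := Kb_pos p q a b ha hb
    have hQ := Pa_pos q b hb n
    have hcf := cf_pos p q a b ha hb n
    have hPa := Pa_pos p a ha n
    have h1 : cf p q a b n * Pa p a n ≤ ((Kb p q a b)^n / n.factorial) * (Kb p q a b * Pa q b n) :=
      mul_le_mul ih (Pa_le p q a b hpq ha hb n) hPa.le (by positivity)
    rw [cf_succ p q a b ha hb n]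
    have h5 : (0:ℝ) < Pa q b n * ((n:ℝ)+1) := by positivity
    calc cf p q a b n * Pa p a n / (Pa q b n * ((n:ℝ)+1))
        ≤ ((Kb p q a b)^n / n.factorial) * (Kb p q a b * Pa q b n) / (Pa q b n * ((n:ℝ)+1)) := by
          gcongr
      _ = (Kb p q a b)^(n+1) / (n+1).factorial := by
          rw [Nat.factorial_succ]
          push_cast
          field_simp
          ring

section Key
variable (p q : ℕ) (a b : ℕ → ℝ)

lemma gmono (hpq : p ≤ q) (ha : ∀ i < p, 0 < a i) (hb : ∀ j < q, 0 < b j)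
    (hchain : ∀ j, 1 ≤ j → j ≤ p →
      esymm q b (q - p + j) / esymm p a j ≤ esymm q b (q - p + j - 1) / esymm p a (j - 1))
    (M : ℕ) {j : ℕ} (hj : 2*j+1 ≤ M) :
    (cA p a j * cA p a (M - j)) / (cA q b j * cA q b (M - j))
      ≤ (cA p a (j+1) * cA p a (M - (j+1))) / (cA q b (j+1) * cA q b (M - (j+1))) := by
  have hjM : j + 1 ≤ M := by omega
  have e1 : M - j = (M - (j+1)) + 1 := by omega
  have hcross := cross p q a b hpq ha hb hchain (s := j) (t := M - (j+1)) (by omega)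
  have hA1 := cA_pos p a ha j
  have hA2 := cA_pos p a ha (M - (j+1))
  have hB1 := cA_pos q b hb j
  have hB2 := cA_pos q b hb (M - (j+1))
  have hB1' := cA_pos q b hb (j+1)
  have hB3 := cA_pos q b hb (M - j)
  rw [div_le_div_iff₀ (by positivity) (by positivity)]
  rw [e1, cA_succ p a, cA_succ q b, cA_succ p a, cA_succ q b]
  have base : (0:ℝ) ≤ cA p a j * cA p a (M - (j+1)) * cA q b j * cA q b (M - (j+1)) := by positivity
  have hPa : Pa p a j = ∏ i ∈ Finset.range p, (a i + (j:ℝ)) := rfl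
  have hPb : Pa q b j = ∏ i ∈ Finset.range q, (b i + (j:ℝ)) := rfl
  calc cA p a j * (cA p a (M - (j+1)) * Pa p a (M - (j+1)))
        * (cA q b j * Pa q b j * cA q b (M - (j+1)))
      = (cA p a j * cA p a (M - (j+1)) * cA q b j * cA q b (M - (j+1)))
          * (Pa p a (M - (j+1)) * Pa q b j) := by ring
    _ ≤ (cA p a j * cA p a (M - (j+1)) * cA q b j * cA q b (M - (j+1)))
          * (Pa p a j * Pa q b (M - (j+1))) := by
        apply mul_le_mul_of_nonneg_left _ base
        exact hcross
    _ = cA p a j * Pa p a j * cA p a (M - (j+1))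
          * (cA q b j * (cA q b (M - (j+1)) * Pa q b (M - (j+1)))) := by ring

lemma key_coeff (hpq : p ≤ q) (ha : ∀ i < p, 0 < a i) (hb : ∀ j < q, 0 < b j)
    (hchain : ∀ j, 1 ≤ j → j ≤ p →
      esymm q b (q - p + j) / esymm p a j ≤ esymm q b (q - p + j - 1) / esymm p a (j - 1))
    (N : ℕ) :
    ∑ k ∈ range (N+1), cf p q a b k
        * (((((N-k:ℕ)):ℝ)+1) * ((((N-k:ℕ)):ℝ)+2) * cf p q a b ((N-k)+2))
      ≤ ∑ k ∈ range (N+1), (((k:ℝ)+1) * cf p q a b (k+1))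
        * (((((N-k:ℕ)):ℝ)+1) * cf p q a b ((N-k)+1)) := by
  set M := N + 2 with hM
  set c : ℕ → ℝ := cf p q a b with hc
  set g : ℕ → ℝ := fun j => (cA p a j * cA p a (M - j)) / (cA q b j * cA q b (M - j)) with hg
  have hcpos : ∀ n, 0 < c n := cf_pos p q a b ha hb
  -- W1 = reindexed RHS, W2 = reindexed LHS
  have claimA : ∑ j ∈ range (M+1), (j:ℝ) * ((M:ℝ) - j) * (c j * c (M - j))
      = ∑ k ∈ range (N+1), (((k:ℝ)+1) * c (k+1)) * (((((N-k:ℕ)):ℝ)+1) * c ((N-k)+1)) := by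
    rw [show M + 1 = (N + 2) + 1 by omega]
    rw [Finset.sum_range_succ, Finset.sum_range_succ']
    have z1 : ((((N+2):ℕ):ℝ)) * ((M:ℝ) - ((N+2):ℕ)) * (c (N+2) * c (M - (N+2))) = 0 := by
      have : (M:ℝ) - ((N+2):ℕ) = 0 := by rw [hM]; push_cast; ring
      rw [this]; ring
    have z0 : ((0:ℕ):ℝ) * ((M:ℝ) - (0:ℕ)) * (c 0 * c (M - 0)) = 0 := by push_cast; ring
    rw [z1, z0, add_zero, add_zero]
    apply Finset.sum_congr rfl
    intro k hk
    rw [mem_range] at hk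
    have e1 : M - (k+1) = (N - k) + 1 := by omega
    have e2 : ((M:ℝ) - (((k+1)):ℕ)) = (((N-k:ℕ)):ℝ) + 1 := by
      push_cast [Nat.cast_sub (by omega : k ≤ N), hM]; ring
    rw [e1, e2]
    push_cast
    ring
  have claimB : ∑ j ∈ range (M+1), ((M:ℝ) - j) * (((M:ℝ) - j) - 1) * (c j * c (M - j))
      = ∑ k ∈ range (N+1), c k * (((((N-k:ℕ)):ℝ)+1) * ((((N-k:ℕ)):ℝ)+2) * c ((N-k)+2)) := by
    rw [show M + 1 = (N + 1) + 1 + 1 by omega]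
    rw [Finset.sum_range_succ, Finset.sum_range_succ]
    have z1 : ((M:ℝ) - ((N+1+1):ℕ)) * (((M:ℝ) - ((N+1+1):ℕ)) - 1) * (c (N+1+1) * c (M - (N+1+1))) = 0 := by
      have : (M:ℝ) - ((N+1+1):ℕ) = 0 := by rw [hM]; push_cast; ring
      rw [this]; ring
    have z2 : ((M:ℝ) - ((N+1):ℕ)) * (((M:ℝ) - ((N+1):ℕ)) - 1) * (c (N+1) * c (M - (N+1))) = 0 := by
      have : (M:ℝ) - ((N+1):ℕ) = 1 := by rw [hM]; push_cast; ring
      rw [this]; ring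
    rw [z1, z2, add_zero, add_zero]
    apply Finset.sum_congr rfl
    intro k hk
    rw [mem_range] at hk
    have e1 : M - k = (N - k) + 2 := by omega
    have e2 : ((M:ℝ) - (k:ℕ)) = (((N-k:ℕ)):ℝ) + 2 := by
      push_cast [Nat.cast_sub (by omega : k ≤ N), hM]; ring
    rw [e1, e2]
    push_cast
    ring
  have claimC : ∑ j ∈ range (M+1), ((M:ℝ) - j) * (((M:ℝ) - j) - 1) * (c j * c (M - j))
      = ∑ j ∈ range (M+1), (j:ℝ) * ((j:ℝ) - 1) * (c j * c (M - j)) := by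
    rw [← Finset.sum_range_reflect]
    apply Finset.sum_congr rfl
    intro j hj
    rw [mem_range] at hj
    have e1 : M + 1 - 1 - j = M - j := by omega
    have e2 : M - (M - j) = j := by omega
    rw [e1, e2]
    have e3 : ((M:ℝ) - ((M - j : ℕ):ℝ)) = (j:ℝ) := by
      push_cast [Nat.cast_sub (by omega : j ≤ M)]; ring
    rw [e3]
    ring
  -- the symmetrized sum is nonneg
  have gsym : ∀ j ≤ M, g j = g (M - j) := by
    intro j hj
    simp only [hg]
    have e : M - (M - j) = j := by omega
    rw [e]
    ring
  have gmono' : ∀ j, 2*j+1 ≤ M → g j ≤ g (j+1) := by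
    intro j hj
    exact gmono p q a b hpq ha hb hchain M hj
  have hcore := core_ineq M g gsym gmono'
  -- rewrite core sum in terms of c j * c (M-j)
  have cgrel : ∀ j ≤ M, c j * c (M - j) = (M.choose j : ℝ) * g j / (M.factorial : ℝ) := by
    intro j hj
    have hfact : ((M.choose j : ℕ) : ℝ) * (j.factorial : ℝ) * ((M-j).factorial : ℝ)
        = (M.factorial : ℝ) := by
      exact_mod_cast congrArg (Nat.cast (R := ℝ)) (Nat.choose_mul_factorial_mul_factorial hj)
    have hA1 := cA_pos p a ha j
    have hA2 := cA_pos p a ha (M - j)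
    have hB1 := cA_pos q b hb j
    have hB2 := cA_pos q b hb (M - j)
    have hf1 : ((j.factorial:ℕ):ℝ) ≠ 0 := by exact_mod_cast j.factorial_pos.ne'
    have hf2 : (((M-j).factorial:ℕ):ℝ) ≠ 0 := by exact_mod_cast (M-j).factorial_pos.ne'
    have hf3 : ((M.factorial:ℕ):ℝ) ≠ 0 := by exact_mod_cast M.factorial_pos.ne'
    have hch : ((M.choose j : ℕ):ℝ) ≠ 0 := by
      have := Nat.choose_pos hj
      exact_mod_cast this.ne'
    simp only [hc, hg, cf]
    field_simp
    rw [← hfact]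
    ring
  have main : ∑ j ∈ range (M+1), ((M:ℝ) - ((M:ℝ) - 2*j)^2) * (c j * c (M - j))
      = (∑ j ∈ range (M+1), (M.choose j : ℝ) * ((M:ℝ) - ((M:ℝ) - 2*j)^2) * g j)
        / (M.factorial : ℝ) := by
    rw [Finset.sum_div]
    apply Finset.sum_congr rfl
    intro j hj
    rw [mem_range] at hj
    rw [cgrel j (by omega)]
    ring
  have hfpos : (0:ℝ) < (M.factorial : ℝ) := by exact_mod_cast M.factorial_pos
  have main2 : 0 ≤ ∑ j ∈ range (M+1), ((M:ℝ) - ((M:ℝ) - 2*j)^2) * (c j * c (M - j)) := by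
    rw [main]
    exact div_nonneg hcore hfpos.le
  have expand : ∑ j ∈ range (M+1), ((M:ℝ) - ((M:ℝ) - 2*j)^2) * (c j * c (M - j))
      = 2 * (∑ j ∈ range (M+1), (j:ℝ) * ((M:ℝ) - j) * (c j * c (M - j)))
        - (∑ j ∈ range (M+1), ((M:ℝ) - j) * (((M:ℝ) - j) - 1) * (c j * c (M - j)))
        - (∑ j ∈ range (M+1), (j:ℝ) * ((j:ℝ) - 1) * (c j * c (M - j))) := by
    rw [Finset.mul_sum, ← Finset.sum_sub_distrib, ← Finset.sum_sub_distrib]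
    apply Finset.sum_congr rfl
    intro j hj
    ring
  linarith [main2, expand, claimA, claimB, claimC]
end Key

open Finset Filter

lemma summable_coeff_pow {c : ℕ → ℝ} {C K : ℝ} (hK : 0 ≤ K)
    (hb : ∀ n, |c n| ≤ C * K^n / n.factorial) (r : ℝ) (hr : 0 ≤ r) :
    Summable (fun n => |c n| * r^n) := by
  have hg : Summable (fun n : ℕ => C * (K*r)^n / n.factorial) := by
    have := (Real.summable_pow_div_factorial (K*r)).mul_left C
    apply this.congr
    intro n; ring
  refine Summable.of_nonneg_of_le (fun n => by positivity) (fun n => ?_) hg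
  calc |c n| * r^n ≤ (C * K^n / n.factorial) * r^n := by
        apply mul_le_mul_of_nonneg_right (hb n) (by positivity)
    _ = C * (K*r)^n / n.factorial := by rw [mul_pow]; ring

/-- Term-by-term differentiation of a power series with factorially-dominated coefficients. -/
lemma hasDerivAt_tsum_pow (c : ℕ → ℝ)
    (hc : ∀ r : ℝ, 0 ≤ r → Summable (fun n : ℕ => |c n| * r^n))
    (hc' : ∀ r : ℝ, 0 ≤ r → Summable (fun n : ℕ => ((n:ℝ)+1) * |c (n+1)| * r^n))
    (x : ℝ) :
    HasDerivAt (fun y => ∑' n : ℕ, c n * y^n) (∑' n : ℕ, ((n:ℝ)+1) * c (n+1) * x^n) x := by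
  set R : ℝ := |x| + 1 with hR
  have hR0 : 0 < R := by positivity
  have hx : x ∈ Metric.ball (0:ℝ) R := by
    simp [Real.dist_eq, hR]
  have hsum : ∀ y : ℝ, Summable (fun n => c n * y^n) := by
    intro y
    apply Summable.of_norm
    have := hc |y| (abs_nonneg y)
    apply this.congr
    intro n
    rw [norm_mul, norm_pow, Real.norm_eq_abs, Real.norm_eq_abs]
  have hder : ∀ N (y : ℝ), HasDerivAt (fun z => ∑ n ∈ range (N+1), c n * z^n)
      (∑ n ∈ range N, ((n:ℝ)+1) * c (n+1) * y^n) y := by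
    intro N y
    have e : ∀ z : ℝ, ∑ n ∈ range (N+1), c n * z^n
        = (∑ n ∈ range N, c (n+1) * z^(n+1)) + c 0 := by
      intro z
      rw [Finset.sum_range_succ']
      simp
    have : HasDerivAt (fun z : ℝ => (∑ n ∈ range N, c (n+1) * z^(n+1)) + c 0)
        (∑ n ∈ range N, ((n:ℝ)+1) * c (n+1) * y^n) y := by
      apply HasDerivAt.add_const
      have : HasDerivAt (fun z : ℝ => ∑ n ∈ range N, c (n+1) * z^(n+1))
          (∑ n ∈ range N, c (n+1) * (((n:ℝ)+1) * y^n)) y := by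
        apply HasDerivAt.fun_sum
        intro n _
        have hp : HasDerivAt (fun z : ℝ => z^(n+1)) (((n:ℝ)+1) * y^n) y := by
          simpa using hasDerivAt_pow (n+1) y
        exact hp.const_mul _
      refine this.congr_deriv ?_
      apply Finset.sum_congr rfl
      intro n _
      ring
    exact this.congr_of_eventuallyEq (Eventually.of_forall e)
  have hTU : TendstoUniformlyOn (fun N (y:ℝ) => ∑ n ∈ range N, ((n:ℝ)+1) * c (n+1) * y^n)
      (fun y => ∑' n : ℕ, ((n:ℝ)+1) * c (n+1) * y^n) atTop (Metric.ball (0:ℝ) R) := by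
    apply tendstoUniformlyOn_tsum_nat (u := fun n : ℕ => ((n:ℝ)+1) * |c (n+1)| * R^n)
    · exact hc' R hR0.le
    · intro n y hy
      rw [Metric.mem_ball, Real.dist_eq, sub_zero] at hy
      rw [Real.norm_eq_abs, abs_mul, abs_mul, abs_pow]
      have h1 : |((n:ℝ)+1)| = (n:ℝ)+1 := abs_of_nonneg (by positivity)
      rw [h1]
      apply mul_le_mul_of_nonneg_left _ (by positivity)
      exact pow_le_pow_left₀ (abs_nonneg y) hy.le n
  exact hasDerivAt_of_tendstoLocallyUniformlyOn (Metric.isOpen_ball)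
    hTU.tendstoLocallyUniformlyOn
    (Eventually.of_forall (fun N => fun y _ => hder N y))
    (fun y _ => ((hsum y).hasSum.tendsto_sum_nat).comp (tendsto_add_atTop_nat 1)) hx


section Assemble
variable (p q : ℕ) (a b : ℕ → ℝ)

theorem stmt_11 (p q : ℕ) (hpq : p ≤ q) (a b : ℕ → ℝ)
    (ha : ∀ i < p, 0 < a i) (hb : ∀ j < q, 0 < b j)
    (hchain : ∀ j, 1 ≤ j → j ≤ p →
      esymm q b (q - p + j) / esymm p a j ≤ esymm q b (q - p + j - 1) / esymm p a (j - 1)) :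
    ConcaveOn ℝ (Set.Ioi (0 : ℝ)) (fun x => Real.log (pFq p q a b x)) ∧
    ∀ x : ℝ, 0 < x →
      pFq p q a b x * deriv (deriv (pFq p q a b)) x ≤ (deriv (pFq p q a b) x) ^ 2 := by
  set c0 : ℕ → ℝ := cf p q a b with hc0
  set c1 : ℕ → ℝ := fun n => ((n:ℝ)+1) * c0 (n+1) with hc1
  set c2 : ℕ → ℝ := fun n => ((n:ℝ)+1) * c1 (n+1) with hc2
  set K : ℝ := Kb p q a b with hK
  have hKpos : 0 < K := Kb_pos p q a b ha hb
  have hcpos : ∀ n, 0 < c0 n := cf_pos p q a b ha hb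
  have hc1pos : ∀ n, 0 < c1 n := fun n => by
    simp only [hc1]; have := hcpos (n+1); positivity
  have hc2pos : ∀ n, 0 < c2 n := fun n => by
    simp only [hc2]; have := hc1pos (n+1); positivity
  -- factorial bounds
  have hb0 : ∀ n, |c0 n| ≤ 1 * K^n / n.factorial := fun n => by
    rw [abs_of_pos (hcpos n), one_mul]; exact cf_le p q a b hpq ha hb n
  have hb1 : ∀ n, |c1 n| ≤ K * K^n / n.factorial := fun n => by
    rw [abs_of_pos (hc1pos n)]
    simp only [hc1]
    have h := cf_le p q a b hpq ha hb (n+1)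
    have e : (((n+1).factorial : ℕ):ℝ) = ((n:ℝ)+1) * (n.factorial:ℝ) := by
      rw [Nat.factorial_succ]; push_cast; ring
    have hn1 : (0:ℝ) < (n:ℝ)+1 := by positivity
    have hf : (0:ℝ) < (n.factorial:ℝ) := by exact_mod_cast n.factorial_pos
    calc ((n:ℝ)+1) * c0 (n+1) ≤ ((n:ℝ)+1) * (K^(n+1) / (n+1).factorial) := by
          apply mul_le_mul_of_nonneg_left h hn1.le
      _ = K * K^n / n.factorial := by
          rw [e, pow_succ]; field_simp
  have hb2 : ∀ n, |c2 n| ≤ (K*K) * K^n / n.factorial := fun n => by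
    rw [abs_of_pos (hc2pos n)]
    simp only [hc2, hc1]
    have h := cf_le p q a b hpq ha hb (n+2)
    have e : (((n+2).factorial : ℕ):ℝ) = ((n:ℝ)+2) * (((n:ℝ)+1) * (n.factorial:ℝ)) := by
      rw [Nat.factorial_succ, Nat.factorial_succ]; push_cast; ring
    have hn1 : (0:ℝ) < (n:ℝ)+1 := by positivity
    have hn2 : (0:ℝ) < ((n:ℝ)+1)+1 := by positivity
    have hf : (0:ℝ) < (n.factorial:ℝ) := by exact_mod_cast n.factorial_pos
    have e2 : ((n:ℕ)+1+1 : ℕ) = (n+2 : ℕ) := by omega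
    show ((n:ℝ)+1) * ((((((n+1)):ℕ):ℝ)+1) * c0 ((n+1)+1)) ≤ _
    rw [← mul_assoc]
    calc ((n:ℝ)+1) * (((((n+1)):ℕ):ℝ)+1) * c0 ((n+1)+1)
        ≤ ((n:ℝ)+1) * (((((n+1)):ℕ):ℝ)+1) * (K^(n+2) / (n+2).factorial) := by
          rw [e2]
          apply mul_le_mul_of_nonneg_left h (by positivity)
      _ = (K*K) * K^n / n.factorial := by
          rw [e]; push_cast
          have hKe : K^(n+2) = K^n * K * K := by ring
          rw [hKe]; field_simp; ring
  -- summability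
  have hs0 : ∀ r : ℝ, 0 ≤ r → Summable (fun n : ℕ => |c0 n| * r^n) :=
    fun r hr => summable_coeff_pow hKpos.le hb0 r hr
  have hs1 : ∀ r : ℝ, 0 ≤ r → Summable (fun n : ℕ => |c1 n| * r^n) :=
    fun r hr => summable_coeff_pow hKpos.le hb1 r hr
  have hs2 : ∀ r : ℝ, 0 ≤ r → Summable (fun n : ℕ => |c2 n| * r^n) :=
    fun r hr => summable_coeff_pow hKpos.le hb2 r hr
  have habs1 : ∀ n : ℕ, ((n:ℝ)+1) * |c0 (n+1)| = |c1 n| := fun n => by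
    rw [abs_of_pos (hc1pos n), abs_of_pos (hcpos (n+1))]
  have habs2 : ∀ n : ℕ, ((n:ℝ)+1) * |c1 (n+1)| = |c2 n| := fun n => by
    rw [abs_of_pos (hc2pos n), abs_of_pos (hc1pos (n+1))]
  -- derivatives
  have hd1 : ∀ x : ℝ, HasDerivAt (fun y => ∑' n : ℕ, c0 n * y^n) (∑' n : ℕ, c1 n * x^n) x := by
    intro x
    have := hasDerivAt_tsum_pow c0 hs0
      (fun r hr => ((hs1 r hr).congr (fun n => by rw [habs1 n])).congr (fun n => rfl)) x
    apply this.congr_deriv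
    apply tsum_congr
    intro n
    rw [hc1]
  have hd2 : ∀ x : ℝ, HasDerivAt (fun y => ∑' n : ℕ, c1 n * y^n) (∑' n : ℕ, c2 n * x^n) x := by
    intro x
    have := hasDerivAt_tsum_pow c1 hs1
      (fun r hr => ((hs2 r hr).congr (fun n => by rw [habs2 n])).congr (fun n => rfl)) x
    apply this.congr_deriv
    apply tsum_congr
    intro n
    rw [hc2]
  -- identification with pFq
  have hfeq : pFq p q a b = fun x => ∑' n : ℕ, c0 n * x^n := by
    funext x
    apply tsum_congr
    intro n
    simp only [hc0, cf, cA, pFq]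
  have hder1 : deriv (pFq p q a b) = fun x => ∑' n : ℕ, c1 n * x^n := by
    funext x
    rw [hfeq]
    exact (hd1 x).deriv
  have hder2 : deriv (deriv (pFq p q a b)) = fun x => ∑' n : ℕ, c2 n * x^n := by
    funext x
    rw [hder1]
    exact (hd2 x).deriv
  -- norms summability at x
  have hnorm : ∀ (c : ℕ → ℝ), (∀ r : ℝ, 0 ≤ r → Summable (fun n : ℕ => |c n| * r^n)) →
      ∀ x : ℝ, Summable (fun n : ℕ => ‖c n * x^n‖) := by
    intro c hs x
    apply (hs |x| (abs_nonneg x)).congr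
    intro n
    rw [Real.norm_eq_abs, abs_mul, abs_pow]
  -- the fundamental inequality
  have main : ∀ x : ℝ, 0 < x →
      (∑' n : ℕ, c0 n * x^n) * (∑' n : ℕ, c2 n * x^n)
        ≤ (∑' n : ℕ, c1 n * x^n) * (∑' n : ℕ, c1 n * x^n) := by
    intro x hx
    rw [tsum_mul_tsum_eq_tsum_sum_range_of_summable_norm (hnorm c0 hs0 x) (hnorm c2 hs2 x),
        tsum_mul_tsum_eq_tsum_sum_range_of_summable_norm (hnorm c1 hs1 x) (hnorm c1 hs1 x)]
    apply Summable.tsum_le_tsum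
    · intro n
      have e1 : ∑ k ∈ range (n+1), (c0 k * x^k) * (c2 (n-k) * x^(n-k))
          = (∑ k ∈ range (n+1), c0 k * c2 (n-k)) * x^n := by
        rw [Finset.sum_mul]
        apply Finset.sum_congr rfl
        intro k hk
        rw [mem_range] at hk
        rw [show x^n = x^k * x^(n-k) by rw [← pow_add]; congr 1; omega]
        ring
      have e2 : ∑ k ∈ range (n+1), (c1 k * x^k) * (c1 (n-k) * x^(n-k))
          = (∑ k ∈ range (n+1), c1 k * c1 (n-k)) * x^n := by
        rw [Finset.sum_mul]
        apply Finset.sum_congr rfl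
        intro k hk
        rw [mem_range] at hk
        rw [show x^n = x^k * x^(n-k) by rw [← pow_add]; congr 1; omega]
        ring
      rw [e1, e2]
      apply mul_le_mul_of_nonneg_right _ (by positivity)
      have hk := key_coeff p q a b hpq ha hb hchain n
      calc ∑ k ∈ range (n+1), c0 k * c2 (n-k)
          = ∑ k ∈ range (n+1), cf p q a b k
              * ((((n-k:ℕ):ℝ)+1) * (((n-k:ℕ):ℝ)+2) * cf p q a b ((n-k)+2)) := by
            apply Finset.sum_congr rfl
            intro k hk'
            simp only [hc2, hc1, hc0]
            push_cast
            ring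
        _ ≤ ∑ k ∈ range (n+1), (((k:ℝ)+1) * cf p q a b (k+1))
              * ((((n-k:ℕ):ℝ)+1) * cf p q a b ((n-k)+1)) := hk
        _ = ∑ k ∈ range (n+1), c1 k * c1 (n-k) := by
            apply Finset.sum_congr rfl
            intro k hk'
            simp only [hc1, hc0]
            try push_cast
            try ring
    · exact (summable_norm_sum_mul_range_of_summable_norm (hnorm c0 hs0 x) (hnorm c2 hs2 x)).of_norm
    · exact (summable_norm_sum_mul_range_of_summable_norm (hnorm c1 hs1 x) (hnorm c1 hs1 x)).of_norm
  -- positivity of f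
  have hfpos : ∀ x : ℝ, 0 < x → 0 < ∑' n : ℕ, c0 n * x^n := by
    intro x hx
    have hsum : Summable (fun n : ℕ => c0 n * x^n) := (hnorm c0 hs0 x).of_norm
    have h1 : c0 0 * x^0 ≤ ∑' n : ℕ, c0 n * x^n := by
      apply Summable.le_tsum hsum 0
      intro j _
      have := hcpos j
      positivity
    have : c0 0 * x^0 = 1 := by
      simp only [hc0, cf_zero, pow_zero, one_mul]
    linarith
  constructor
  · -- concavity of log ∘ f
    have hIoi : interior (Set.Ioi (0:ℝ)) = Set.Ioi 0 := interior_Ioi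
    apply concaveOn_of_hasDerivWithinAt2_nonpos (convex_Ioi 0)
      (f' := fun x => (∑' n : ℕ, c1 n * x^n) / (∑' n : ℕ, c0 n * x^n))
      (f'' := fun x => ((∑' n : ℕ, c2 n * x^n) * (∑' n : ℕ, c0 n * x^n)
        - (∑' n : ℕ, c1 n * x^n) * (∑' n : ℕ, c1 n * x^n)) / (∑' n : ℕ, c0 n * x^n)^2)
    · -- continuity
      intro x hx
      have hx' : (0:ℝ) < x := Set.mem_Ioi.mp hx
      apply ContinuousAt.continuousWithinAt
      have hca : ContinuousAt (pFq p q a b) x := by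
        rw [hfeq]; exact (hd1 x).continuousAt
      exact (Real.continuousAt_log (by rw [hfeq]; exact (hfpos x hx').ne')).comp hca
    · intro x hx
      rw [hIoi] at hx
      have hne := (hfpos x hx).ne'
      have : HasDerivAt (fun y => Real.log (pFq p q a b y))
          ((∑' n : ℕ, c1 n * x^n) / (∑' n : ℕ, c0 n * x^n)) x := by
        rw [hfeq]
        exact HasDerivAt.log (hd1 x) hne
      exact this.hasDerivWithinAt
    · intro x hx
      rw [hIoi] at hx
      have hne := (hfpos x hx).ne'
      have : HasDerivAt (fun y => (∑' n : ℕ, c1 n * y^n) / (∑' n : ℕ, c0 n * y^n))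
          (((∑' n : ℕ, c2 n * x^n) * (∑' n : ℕ, c0 n * x^n)
            - (∑' n : ℕ, c1 n * x^n) * (∑' n : ℕ, c1 n * x^n)) / (∑' n : ℕ, c0 n * x^n)^2) x :=
        (hd2 x).div (hd1 x) hne
      exact this.hasDerivWithinAt
    · intro x hx
      rw [hIoi] at hx
      apply div_nonpos_of_nonpos_of_nonneg
      · linarith [main x hx]
      · positivity
  · intro x hx
    rw [hder2, hder1, hfeq]
    simp only []
    rw [sq]
    exact main x hx
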